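/- arXiv:2307.06631 — 4 statements merged into one kernel-verified Lean document; each statement's English description precedes it below -/
import Mathlib

section
/- Let U be orthogonal, Λ_k diagonal with ∑_k Λ_k^2 = I and all diagonal entries λ_{k,i} satisfying |λ_{k,i}| ≤ 1, and W_k = U^T Λ_k U. Then for any ℓ ≥ 1, any positive semidefinite L = U^T Λ U with Λ diagonal nonnegative, and any n×d matrix H, the simplified-framelet energy ∑_k tr((W_k^ℓ H)^T L (W_k^ℓ H)) is at most tr(H^T L H). -/
open Matrix BigOperators

lemma trace_conj_diag (n d : ℕ) (v : Fin n → ℝ) (G : Matrix (Fin n) (Fin d) ℝ) :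
    (Gᵀ * Matrix.diagonal v * G).trace = ∑ i, v i * ∑ j, (G i j)^2 := by
  rw [Matrix.mul_assoc]
  simp only [Matrix.trace, Matrix.diag, Matrix.mul_apply, Matrix.transpose_apply,
    Matrix.diagonal_apply, ite_mul, zero_mul, Finset.sum_ite_eq, Finset.mem_univ, if_pos]
  rw [Finset.sum_comm]
  congr 1; ext i
  rw [Finset.mul_sum]
  congr 1; ext j
  ring

theorem simplified_framelet_energy_decreases
    (n d K ℓ : ℕ) (hℓ : 1 ≤ ℓ)
    (U : Matrix (Fin n) (Fin n) ℝ) (hU : Uᵀ * U = 1)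
    (lam : Fin n → ℝ) (hlam : ∀ i, 0 ≤ lam i)
    (lamk : Fin K → Fin n → ℝ) (habs : ∀ k i, |lamk k i| ≤ 1)
    (W : Fin K → Matrix (Fin n) (Fin n) ℝ)
    (hW : ∀ k, W k = Uᵀ * Matrix.diagonal (lamk k) * U)
    (htight : ∑ k, (Matrix.diagonal (lamk k)) ^ 2 = 1)
    (H : Matrix (Fin n) (Fin d) ℝ) :
    ∑ k, (((W k) ^ ℓ * H)ᵀ * (Uᵀ * Matrix.diagonal lam * U) * ((W k) ^ ℓ * H)).trace
      ≤ (Hᵀ * (Uᵀ * Matrix.diagonal lam * U) * H).trace := by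
  have hUU : U * Uᵀ = 1 := mul_eq_one_comm.mp hU
  have hWpow : ∀ k, (W k) ^ ℓ = Uᵀ * Matrix.diagonal (fun i => lamk k i ^ ℓ) * U := by
    intro k
    clear hℓ
    induction ℓ with
    | zero => simp [hU]
    | succ m ih =>
        rw [pow_succ, ih, hW k]
        calc Uᵀ * Matrix.diagonal (fun i => lamk k i ^ m) * U *
              (Uᵀ * Matrix.diagonal (lamk k) * U)
            = Uᵀ * (Matrix.diagonal (fun i => lamk k i ^ m) * (U * Uᵀ) *
              Matrix.diagonal (lamk k)) * U := by
              simp only [Matrix.mul_assoc]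
          _ = Uᵀ * Matrix.diagonal (fun i => lamk k i ^ (m+1)) * U := by
              rw [hUU, Matrix.mul_one, Matrix.diagonal_mul_diagonal]
              have hfun : (fun i => lamk k i ^ m * lamk k i)
                  = fun i => lamk k i ^ (m+1) := by
                funext i; rw [pow_succ]
              rw [hfun]
  have key : ∀ k, (((W k) ^ ℓ * H)ᵀ * (Uᵀ * Matrix.diagonal lam * U) * ((W k) ^ ℓ * H))
      = (U * H)ᵀ * Matrix.diagonal (fun i => lamk k i ^ ℓ * lam i * lamk k i ^ ℓ) * (U * H) := by
    intro k
    rw [hWpow k]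
    have : (Uᵀ * Matrix.diagonal (fun i => lamk k i ^ ℓ) * U * H)ᵀ
        = Hᵀ * Uᵀ * Matrix.diagonal (fun i => lamk k i ^ ℓ) * U := by
      simp [Matrix.transpose_mul, Matrix.mul_assoc]
    rw [this]
    have e : ∀ (A B : Matrix (Fin n) (Fin n) ℝ),
        Matrix.diagonal A.diag = A → True := fun _ _ _ => trivial
    calc Hᵀ * Uᵀ * Matrix.diagonal (fun i => lamk k i ^ ℓ) * U *
          (Uᵀ * Matrix.diagonal lam * U) *
          (Uᵀ * Matrix.diagonal (fun i => lamk k i ^ ℓ) * U * H)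
        = Hᵀ * Uᵀ * (Matrix.diagonal (fun i => lamk k i ^ ℓ) * (U * Uᵀ) *
          Matrix.diagonal lam * (U * Uᵀ) * Matrix.diagonal (fun i => lamk k i ^ ℓ)) *
          (U * H) := by simp only [Matrix.mul_assoc]
      _ = (U * H)ᵀ * Matrix.diagonal (fun i => lamk k i ^ ℓ * lam i * lamk k i ^ ℓ) * (U * H) := by
          rw [hUU, Matrix.mul_one, Matrix.mul_one, Matrix.diagonal_mul_diagonal,
            Matrix.diagonal_mul_diagonal, Matrix.transpose_mul, Matrix.mul_assoc]
  simp only [key]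
  have hRHS : Hᵀ * (Uᵀ * Matrix.diagonal lam * U) * H
      = (U * H)ᵀ * Matrix.diagonal lam * (U * H) := by
    rw [Matrix.transpose_mul]
    simp only [Matrix.mul_assoc]
  rw [hRHS]
  set G := U * H with hG
  simp only [trace_conj_diag]
  have ht : ∀ i, ∑ k, (lamk k i)^2 = 1 := by
    intro i
    have h1 := congrFun (congrFun htight i) i
    simp only [Matrix.sum_apply, pow_two, Matrix.diagonal_mul_diagonal,
      Matrix.diagonal_apply_eq, Matrix.one_apply_eq] at h1
    simpa [← pow_two] using h1
  rw [Finset.sum_comm]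
  apply Finset.sum_le_sum
  intro i _
  have hs : 0 ≤ ∑ j, (G i j)^2 := Finset.sum_nonneg fun j _ => sq_nonneg _
  have hbd : ∑ k, lamk k i ^ ℓ * lam i * lamk k i ^ ℓ ≤ lam i := by
    have : ∑ k, lamk k i ^ ℓ * lam i * lamk k i ^ ℓ
        = lam i * ∑ k, (lamk k i)^(2*ℓ) := by
      rw [Finset.mul_sum]; congr 1; ext k; rw [two_mul, pow_add]; ring
    rw [this]
    have hle : ∑ k, (lamk k i)^(2*ℓ) ≤ 1 := by
      rw [← ht i]
      apply Finset.sum_le_sum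
      intro k _
      have h1 : |lamk k i| ^ (2*ℓ) ≤ |lamk k i| ^ 2 :=
        pow_le_pow_of_le_one (abs_nonneg _) (habs k i) (by omega)
      calc (lamk k i)^(2*ℓ) = |lamk k i| ^ (2*ℓ) := by
            rw [← abs_pow, abs_of_nonneg (even_two_mul ℓ |>.pow_nonneg _)]
        _ ≤ |lamk k i| ^ 2 := h1
        _ = (lamk k i)^2 := sq_abs _
    nlinarith [hlam i]
  calc ∑ k, (lamk k i ^ ℓ * lam i * lamk k i ^ ℓ) * ∑ j, (G i j)^2
      = (∑ k, lamk k i ^ ℓ * lam i * lamk k i ^ ℓ) * ∑ j, (G i j)^2 := by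
        rw [Finset.sum_mul]
    _ ≤ lam i * ∑ j, (G i j)^2 := mul_le_mul_of_nonneg_right hbd hs
end

section
/- Let A_k (k = 1,...,K) be n×n real matrices and suppose a layered propagation is defined by H^{(t+1)} = ∑_k A_k H^{(t)} W_k^{(t)}, where each W_k^{(t)} is a d×d matrix with all entries bounded in absolute value by β. Then for any layers t and entries, the partial derivative of the (v,q)-entry of H^{(ℓ+1)} with respect to the (u,p)-entry of H^{(0)} is bounded in absolute value by (dβ)^{ℓ+1} times the (v,u)-entry of (∑_k |A_k|)^{ℓ+1}, where |A_k| denotes the entrywise absolute value. -/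
/-!
The propagation `H ↦ ∑ₖ Aₖ H Wₖ` is linear, so the derivative in the direction of the matrix
unit `E = single u p 1` is the propagated matrix `F (ℓ + 1) E` itself. Its entries are controlled
by induction on the layer: if every entry in row `w` of `H` is at most `M w` in absolute value,
then every entry in row `i` of `∑ₖ Aₖ H Wₖ` is at most `d β (∑ₖ |Aₖ| M) i`. Starting from
`|E w r| ≤ 1 w u`, this yields the bound `(d β)ᵗ ((∑ₖ |Aₖ|)ᵗ) w u` at layer `t`.
-/

open Matrix BigOperators

theorem abs_single_one_apply_le {ι κ : Type*} [DecidableEq ι] [DecidableEq κ] (u i : ι)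
    (p r : κ) :
    |(single u p (1 : ℝ)) i r| ≤ (1 : Matrix ι ι ℝ) i u := by
  rw [single_apply, one_apply]
  split_ifs <;> simp_all

section Propagation

variable {ι κ σ : Type*} [Fintype ι] [Fintype κ] [Fintype σ]

theorem abs_sum_mul_mul_apply_le (A : σ → Matrix ι ι ℝ) (W : σ → Matrix κ κ ℝ) {β : ℝ}
    (hW : ∀ k p q, |W k p q| ≤ β) (X : Matrix ι κ ℝ) (M : ι → ℝ) (hX : ∀ i r, |X i r| ≤ M i)
    (i : ι) (q : κ) :
    |(∑ k, A k * X * W k) i q| ≤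
      Fintype.card κ * β * ((∑ k, (A k).map (fun x => |x|)) *ᵥ M) i := by
  have expand : (∑ k, A k * X * W k) i q = ∑ k, ∑ r, ∑ w, A k i w * X w r * W k r q := by
    simp only [Matrix.sum_apply, Matrix.mul_apply, Finset.sum_mul]
  have term_le : ∀ k r w, |A k i w * X w r * W k r q| ≤ |A k i w| * M w * β := fun k r w => by
    rw [abs_mul, abs_mul]
    have hM : 0 ≤ M w := (abs_nonneg _).trans (hX w r)
    gcongr
    exacts [hX w r, hW k r q]
  calc |(∑ k, A k * X * W k) i q|
      ≤ ∑ k, ∑ r, ∑ w, |A k i w * X w r * W k r q| := by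
        rw [expand]
        refine (Finset.abs_sum_le_sum_abs _ _).trans (Finset.sum_le_sum fun k _ => ?_)
        refine (Finset.abs_sum_le_sum_abs _ _).trans (Finset.sum_le_sum fun r _ => ?_)
        exact Finset.abs_sum_le_sum_abs _ _
    _ ≤ ∑ k, ∑ _r : κ, ∑ w, |A k i w| * M w * β :=
        Finset.sum_le_sum fun k _ => Finset.sum_le_sum fun r _ =>
          Finset.sum_le_sum fun w _ => term_le k r w
    _ = Fintype.card κ * β * ((∑ k, (A k).map (fun x => |x|)) *ᵥ M) i := by
        simp only [Finset.sum_const, Finset.card_univ, nsmul_eq_mul, mulVec, dotProduct,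
          Matrix.sum_apply, Matrix.map_apply, Finset.sum_mul, Finset.mul_sum]
        rw [Finset.sum_comm]
        refine Finset.sum_congr rfl fun w _ => Finset.sum_congr rfl fun k _ => ?_
        ring

variable (A : σ → Matrix ι ι ℝ) (W : ℕ → σ → Matrix κ κ ℝ)
  {F : ℕ → Matrix ι κ ℝ → Matrix ι κ ℝ}

theorem propagation_add_smul (hF0 : ∀ X, F 0 X = X)
    (hFs : ∀ t X, F (t + 1) X = ∑ k, A k * F t X * W t k) (t : ℕ) (X Y : Matrix ι κ ℝ)
    (s : ℝ) : F t (X + s • Y) = F t X + s • F t Y := by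
  induction t with
  | zero => simp only [hF0]
  | succ t ih =>
    simp only [hFs, ih, Finset.smul_sum, ← Finset.sum_add_distrib, Matrix.mul_add,
      Matrix.add_mul, Matrix.mul_smul, Matrix.smul_mul]

theorem hasDerivAt_propagation_apply (hF0 : ∀ X, F 0 X = X)
    (hFs : ∀ t X, F (t + 1) X = ∑ k, A k * F t X * W t k) (t : ℕ) (X Y : Matrix ι κ ℝ)
    (i : ι) (q : κ) (s : ℝ) : HasDerivAt (fun s : ℝ => F t (X + s • Y) i q) (F t Y i q) s := by
  simp only [propagation_add_smul A W hF0 hFs, Matrix.add_apply, Matrix.smul_apply, smul_eq_mul]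
  simpa using ((hasDerivAt_id s).mul_const (F t Y i q)).const_add (F t X i q)

theorem abs_propagation_single_apply_le [DecidableEq ι] [DecidableEq κ] {β : ℝ}
    (hW : ∀ t k p q, |W t k p q| ≤ β) (hF0 : ∀ X, F 0 X = X)
    (hFs : ∀ t X, F (t + 1) X = ∑ k, A k * F t X * W t k) (u : ι) (p : κ) (t : ℕ) (i : ι)
    (r : κ) :
    |F t (single u p 1) i r| ≤
      (Fintype.card κ * β) ^ t * ((∑ k, (A k).map (fun x => |x|)) ^ t) i u := by
  induction t generalizing i r with
  | zero => simpa [hF0] using abs_single_one_apply_le u i p r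
  | succ t ih =>
    rw [hFs]
    refine (abs_sum_mul_mul_apply_le A (W t) (hW t) _ _ ih i r).trans_eq ?_
    rw [pow_succ', pow_succ', Matrix.mul_apply]
    simp only [mulVec, dotProduct, Finset.mul_sum]
    exact Finset.sum_congr rfl fun w _ => by ring

end Propagation

theorem oversquashing_sensitivity_bound
    (n d K : ℕ) (A : Fin K → Matrix (Fin n) (Fin n) ℝ)
    (Wmat : ℕ → Fin K → Matrix (Fin d) (Fin d) ℝ) (β : ℝ)
    (hβ : ∀ t k p q, |Wmat t k p q| ≤ β)
    (F : ℕ → Matrix (Fin n) (Fin d) ℝ → Matrix (Fin n) (Fin d) ℝ)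
    (hF0 : ∀ X, F 0 X = X)
    (hFs : ∀ t X, F (t + 1) X = ∑ k, A k * F t X * Wmat t k)
    (ℓ : ℕ) (H0 : Matrix (Fin n) (Fin d) ℝ) (v u : Fin n) (q p : Fin d) (c : ℝ)
    (hderiv : HasDerivAt
      (fun t : ℝ => F (ℓ + 1) (H0 + t • Matrix.single u p 1) v q) c 0) :
    |c| ≤ ((d : ℝ) * β) ^ (ℓ + 1) *
      ((∑ k, (A k).map (fun x => |x|)) ^ (ℓ + 1)) v u := by
  rw [hderiv.unique (hasDerivAt_propagation_apply A Wmat hF0 hFs _ H0 _ v q 0)]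
  simpa using abs_propagation_single_apply_le A Wmat hβ hF0 hFs u p (ℓ + 1) v q
end

section
/- Let A be an n×n real matrix and suppose H^{(ℓ+1)} = A^{ℓ+1} H^{(0)} W with H^{(0)} an n×d_0 matrix and W a d_0×c matrix whose entries are bounded in absolute value by β. Then the partial derivative of the (v,q)-entry of H^{(ℓ+1)} with respect to the (u,p)-entry of H^{(0)} has absolute value at most β · |(A^{ℓ+1})_{v,u}|, and hence, for the simplified framelet H^{(ℓ+1)} = ∑_k A_k^{ℓ+1} H^{(0)} W_k with each W_k entrywise bounded by β, the sensitivity is at most β · (∑_k |A_k|^{ℓ+1})_{v,u} entrywise (where |A_k| is the entrywise absolute value). -/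
/-!
Perturbing `H⁽⁰⁾` along the matrix unit at `(u, p)` makes every entry of `M * H⁽⁰⁾ * W` affine in
the perturbation parameter, with slope `M v u * W p q`; so the sensitivity is this slope (summed
over `k` in the framelet case). The bounds then follow from `|W p q| ≤ β` and the entrywise
estimate `|(A ^ m) v u| ≤ (|A| ^ m) v u`, which is the triangle inequality applied to each matrix
product.
-/

open Matrix BigOperators

namespace Matrix

variable {ι l m n o R : Type*} [Fintype m] [Fintype n] [DecidableEq m] [DecidableEq n]

theorem mul_single_one_mul_apply [Semiring R] (M : Matrix l m R) (W : Matrix n o R)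
    (u : m) (p : n) (v : l) (q : o) :
    (M * single u p (1 : R) * W) v q = M v u * W p q := by
  simp [mul_apply, single, ite_and]

section Derivative

variable {𝕜 : Type*} [NontriviallyNormedField 𝕜] (H : Matrix m n 𝕜) (u : m) (p : n) (v : l)
  (q : o) (t₀ : 𝕜)

theorem hasDerivAt_mul_add_smul_single_mul_apply (M : Matrix l m 𝕜) (W : Matrix n o 𝕜) :
    HasDerivAt (fun t : 𝕜 => (M * (H + t • single u p 1) * W : Matrix l o 𝕜) v q)
      (M v u * W p q) t₀ := by
  have h_affine : (fun t : 𝕜 => (M * (H + t • single u p 1) * W : Matrix l o 𝕜) v q)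
      = fun t => (M * H * W) v q + t * (M v u * W p q) := by
    funext t
    rw [Matrix.mul_add, Matrix.add_mul, Matrix.mul_smul, Matrix.smul_mul, add_apply, smul_apply,
      mul_single_one_mul_apply, smul_eq_mul]
  rw [h_affine]
  simpa using ((hasDerivAt_id t₀).mul_const (M v u * W p q)).const_add ((M * H * W) v q)

theorem hasDerivAt_sum_mul_add_smul_single_mul_apply [Fintype ι] (M : ι → Matrix l m 𝕜)
    (W : ι → Matrix n o 𝕜) :
    HasDerivAt (fun t : 𝕜 => (∑ k, M k * (H + t • single u p 1) * W k : Matrix l o 𝕜) v q)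
      (∑ k, M k v u * W k p q) t₀ := by
  simp only [sum_apply]
  exact HasDerivAt.fun_sum fun k _ => hasDerivAt_mul_add_smul_single_mul_apply H u p v q t₀ _ _

end Derivative

theorem abs_pow_apply_le_map_abs_pow [Ring R] [LinearOrder R] [IsStrictOrderedRing R]
    (A : Matrix m m R) (k : ℕ) (i j : m) :
    |(A ^ k) i j| ≤ (A.map (|·|) ^ k) i j := by
  induction k generalizing j with
  | zero => by_cases h : i = j <;> simp [h]
  | succ k ih =>
    simp only [pow_succ, mul_apply]
    refine (Finset.abs_sum_le_sum_abs _ _).trans (Finset.sum_le_sum fun x _ => ?_)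
    rw [abs_mul, map_apply]
    exact mul_le_mul_of_nonneg_right (ih x) (abs_nonneg _)

end Matrix

theorem abs_mul_le_of_abs_le {R : Type*} [CommRing R] [LinearOrder R] [IsStrictOrderedRing R]
    {a w b β : R} (ha : |a| ≤ b) (hw : |w| ≤ β) : |a * w| ≤ β * b := by
  rw [abs_mul, mul_comm]
  exact mul_le_mul hw ha (abs_nonneg a) ((abs_nonneg w).trans hw)

theorem simplified_framelet_oversquashing_bound
    (n d₀ c K ℓ : ℕ) (β : ℝ)
    (A : Matrix (Fin n) (Fin n) ℝ) (W : Matrix (Fin d₀) (Fin c) ℝ)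
    (hW : ∀ p q, |W p q| ≤ β)
    (Ak : Fin K → Matrix (Fin n) (Fin n) ℝ)
    (Wk : Fin K → Matrix (Fin d₀) (Fin c) ℝ)
    (hWk : ∀ k p q, |Wk k p q| ≤ β)
    (H0 : Matrix (Fin n) (Fin d₀) ℝ) :
    (∀ (v u : Fin n) (q : Fin c) (p : Fin d₀) (cd : ℝ),
        HasDerivAt
          (fun t : ℝ => ((A ^ (ℓ + 1) * (H0 + t • Matrix.single u p 1) * W : Matrix (Fin n) (Fin c) ℝ)) v q)
          cd 0 →
        |cd| ≤ β * |(A ^ (ℓ + 1)) v u|) ∧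
    (∀ (v u : Fin n) (q : Fin c) (p : Fin d₀) (cd : ℝ),
        HasDerivAt
          (fun t : ℝ =>
            ((∑ k, (Ak k) ^ (ℓ + 1) * (H0 + t • Matrix.single u p 1) * Wk k : Matrix (Fin n) (Fin c) ℝ)) v q)
          cd 0 →
        |cd| ≤ β * (∑ k, ((Ak k).map (fun x => |x|)) ^ (ℓ + 1)) v u) := by
  constructor
  · intro v u q p cd h
    rw [h.unique (hasDerivAt_mul_add_smul_single_mul_apply H0 u p v q 0 _ W)]
    exact abs_mul_le_of_abs_le le_rfl (hW p q)
  · intro v u q p cd h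
    rw [h.unique (hasDerivAt_sum_mul_add_smul_single_mul_apply H0 u p v q 0 _ Wk), Matrix.sum_apply,
      Finset.mul_sum]
    refine (Finset.abs_sum_le_sum_abs _ _).trans (Finset.sum_le_sum fun k _ => ?_)
    exact abs_mul_le_of_abs_le (abs_pow_apply_le_map_abs_pow _ _ _ _) (hWk k p q)
end

section
/- Let σ: R → R be differentiable with |σ'(x)| ≤ M for all x, and suppose H^{(t+1)} = σ(∑_k A_k H^{(t)} W_k^{(t)}) applied entrywise, with each W_k^{(t)} entrywise bounded by β and A_k fixed n×n matrices. Then the absolute value of the partial derivative of the (v,q)-entry of H^{(ℓ+1)} with respect to the (u,p)-entry of H^{(0)} is at most (M d β)^{ℓ+1} ((∑_k |A_k|)^{ℓ+1})_{v,u}. -/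
open Matrix BigOperators

/-! Differentiating the recursion along a line `H0 + s • E`, the tangent of layer `t + 1` is
`σ'(pre-activation) ⊙ ∑ k, A k * C * W t k`, where `C` is the tangent of layer `t`. If every row
`w` of `C` is bounded entrywise by `b w`, the next tangent is bounded by `M d β (∑ k, |A k|) *ᵥ b`,
so the bound `(M d β)^t (∑ k, |A k|)^t *ᵥ b` follows by induction; for `E = single u p 1` one
takes `b = Pi.single u 1`, which picks out column `u`. -/

section EntrywiseBounds

variable {l m n κ ι : Type*} [Fintype m]

theorem abs_mul_apply_le_mulVec (A : Matrix l m ℝ) {X : Matrix m n ℝ} {b : m → ℝ}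
    (hX : ∀ w j, |X w j| ≤ b w) (v : l) (j : n) :
    |(A * X) v j| ≤ (A.map abs *ᵥ b) v :=
  calc |(A * X) v j| ≤ ∑ w, |A v w * X w j| := Finset.abs_sum_le_sum_abs _ _
    _ ≤ ∑ w, |A v w| * b w := by
        gcongr with w
        rw [abs_mul]
        exact mul_le_mul_of_nonneg_left (hX w j) (abs_nonneg _)

theorem abs_mul_mul_apply_le_mulVec [Fintype n] (A : Matrix l m ℝ) {X : Matrix m n ℝ}
    {W : Matrix n κ ℝ} {β : ℝ} {b : m → ℝ} (hX : ∀ w j, |X w j| ≤ b w)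
    (hW : ∀ j q, |W j q| ≤ β) (v : l) (q : κ) :
    |(A * X * W) v q| ≤ Fintype.card n * β * (A.map abs *ᵥ b) v := by
  have hAX := abs_mul_apply_le_mulVec A hX v
  calc |(A * X * W) v q| ≤ ∑ j, |(A * X) v j * W j q| := Finset.abs_sum_le_sum_abs _ _
    _ ≤ ∑ _j : n, (A.map abs *ᵥ b) v * β := by
        gcongr with j
        rw [abs_mul]
        exact mul_le_mul (hAX j) (hW j q) (abs_nonneg _) ((abs_nonneg _).trans (hAX j))
    _ = Fintype.card n * β * (A.map abs *ᵥ b) v := by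
        rw [Finset.sum_const, Finset.card_univ, nsmul_eq_mul]
        ring

theorem abs_sum_mul_mul_apply_le_mulVec [Fintype n] [Fintype ι] (A : ι → Matrix l m ℝ)
    {X : Matrix m n ℝ} {W : ι → Matrix n κ ℝ} {β : ℝ} {b : m → ℝ} (hX : ∀ w j, |X w j| ≤ b w)
    (hW : ∀ k j q, |W k j q| ≤ β) (v : l) (q : κ) :
    |(∑ k, A k * X * W k) v q| ≤ Fintype.card n * β * ((∑ k, (A k).map abs) *ᵥ b) v := by
  rw [Matrix.sum_apply, Matrix.sum_mulVec, Finset.sum_apply, Finset.mul_sum]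
  exact (Finset.abs_sum_le_sum_abs _ _).trans
    (Finset.sum_le_sum fun k _ => abs_mul_mul_apply_le_mulVec (A k) hX (hW k) v q)

end EntrywiseBounds

section Derivatives

variable {l m n κ ι : Type*} [Fintype m] [Fintype n] [Fintype ι]

theorem hasDerivAt_sum_mul_mul_apply {X : ℝ → Matrix m n ℝ} {X' : Matrix m n ℝ} {s : ℝ}
    (hX : ∀ w j, HasDerivAt (fun t => X t w j) (X' w j) s)
    (A : ι → Matrix l m ℝ) (W : ι → Matrix n κ ℝ) (v : l) (q : κ) :
    HasDerivAt (fun t => (∑ k, A k * X t * W k) v q) ((∑ k, A k * X' * W k) v q) s := by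
  simp only [Matrix.sum_apply, Matrix.mul_apply]
  exact HasDerivAt.fun_sum fun k _ => HasDerivAt.fun_sum fun j _ =>
    (HasDerivAt.fun_sum fun w _ => (hX w j).const_mul _).mul_const _

theorem hasDerivAt_map_sum_mul_mul_apply {σ : ℝ → ℝ} (hσ : Differentiable ℝ σ)
    {X : ℝ → Matrix m n ℝ} {X' : Matrix m n ℝ} {s : ℝ}
    (hX : ∀ w j, HasDerivAt (fun t => X t w j) (X' w j) s)
    (A : ι → Matrix l m ℝ) (W : ι → Matrix n κ ℝ) (v : l) (q : κ) :
    HasDerivAt (fun t => (∑ k, A k * X t * W k).map σ v q)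
      (deriv σ ((∑ k, A k * X s * W k) v q) * (∑ k, A k * X' * W k) v q) s :=
  (hσ _).hasDerivAt.comp s (hasDerivAt_sum_mul_mul_apply hX A W v q)

end Derivatives

theorem exists_hasDerivAt_layer_abs_le {V D ι : Type*} [Fintype V] [DecidableEq V] [Fintype D]
    [Fintype ι]
    (A : ι → Matrix V V ℝ) (W : ℕ → ι → Matrix D D ℝ) {β M : ℝ}
    (hβ : ∀ t k p q, |W t k p q| ≤ β) {σ : ℝ → ℝ} (hσ : Differentiable ℝ σ)
    (hσ' : ∀ x, |deriv σ x| ≤ M) (F : ℕ → Matrix V D ℝ → Matrix V D ℝ)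
    (hF0 : ∀ X, F 0 X = X) (hFs : ∀ t X, F (t + 1) X = (∑ k, A k * F t X * W t k).map σ)
    (H0 E : Matrix V D ℝ) {b : V → ℝ} (hE : ∀ w j, |E w j| ≤ b w) (t : ℕ) :
    ∃ C : Matrix V D ℝ, (∀ v q, HasDerivAt (fun s : ℝ => F t (H0 + s • E) v q) (C v q) 0) ∧
      ∀ v q, |C v q| ≤ (M * Fintype.card D * β) ^ t * ((∑ k, (A k).map abs) ^ t *ᵥ b) v := by
  induction t with
  | zero =>
    refine ⟨E, fun v q => ?_, by simpa using hE⟩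
    simpa [hF0] using (hasDerivAt_mul_const (E v q)).const_add (H0 v q)
  | succ t ih =>
    obtain ⟨C, hC, hCb⟩ := ih
    refine ⟨fun v q => deriv σ ((∑ k, A k * F t H0 * W t k) v q) * (∑ k, A k * C * W t k) v q,
      fun v q => ?_, fun v q => ?_⟩
    · simpa [hFs] using hasDerivAt_map_sum_mul_mul_apply hσ hC A (W t) v q
    · set P := ∑ k, (A k).map abs
      set γ := M * Fintype.card D * β
      have hCb' : ∀ w j, |C w j| ≤ (γ ^ t • (P ^ t *ᵥ b)) w := hCb
      have hlin := abs_sum_mul_mul_apply_le_mulVec A hCb' (hβ t) v q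
      rw [Matrix.mulVec_smul, Matrix.mulVec_mulVec, ← pow_succ'] at hlin
      calc |deriv σ ((∑ k, A k * F t H0 * W t k) v q) * (∑ k, A k * C * W t k) v q|
          = |deriv σ _| * |(∑ k, A k * C * W t k) v q| := abs_mul _ _
        _ ≤ M * (Fintype.card D * β * (γ ^ t • (P ^ (t + 1) *ᵥ b)) v) :=
          mul_le_mul (hσ' _) hlin (abs_nonneg _) ((abs_nonneg _).trans (hσ' 0))
        _ = γ ^ (t + 1) * (P ^ (t + 1) *ᵥ b) v := by
          rw [Pi.smul_apply, smul_eq_mul, pow_succ]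
          ring

theorem oversquashing_sensitivity_bound_with_activation
    (n d K : ℕ) (A : Fin K → Matrix (Fin n) (Fin n) ℝ)
    (Wmat : ℕ → Fin K → Matrix (Fin d) (Fin d) ℝ) (β M : ℝ)
    (hβ : ∀ t k p q, |Wmat t k p q| ≤ β)
    (σ : ℝ → ℝ) (hσ : Differentiable ℝ σ) (hσ' : ∀ x, |deriv σ x| ≤ M)
    (F : ℕ → Matrix (Fin n) (Fin d) ℝ → Matrix (Fin n) (Fin d) ℝ)
    (hF0 : ∀ X, F 0 X = X)
    (hFs : ∀ t X, F (t + 1) X = (∑ k, A k * F t X * Wmat t k).map σ)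
    (ℓ : ℕ) (H0 : Matrix (Fin n) (Fin d) ℝ) (v u : Fin n) (q p : Fin d) (c : ℝ)
    (hderiv : HasDerivAt
      (fun t : ℝ => F (ℓ + 1) (H0 + t • Matrix.single u p 1) v q) c 0) :
    |c| ≤ (M * (d : ℝ) * β) ^ (ℓ + 1) *
      ((∑ k, (A k).map (fun x => |x|)) ^ (ℓ + 1)) v u := by
  have hsingle : ∀ w j, |(Matrix.single u p (1 : ℝ)) w j| ≤ (Pi.single u 1 : Fin n → ℝ) w := by
    intro w j
    rw [Matrix.single_apply, Pi.single_apply]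
    split_ifs with h₁ h₂ <;> first | exact absurd h₁.1.symm h₂ | simp
  obtain ⟨C, hC, hCb⟩ := exists_hasDerivAt_layer_abs_le A Wmat hβ hσ hσ' F hF0 hFs H0
    (Matrix.single u p 1) hsingle (ℓ + 1)
  rw [hderiv.unique (hC v q)]
  simpa [Matrix.mulVec_single_one] using hCb v q
end
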